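/- Let η, η' : K'' → K and φ₁,...,φₙ : K → K' be simplicial maps. If φ₁∘η' ∼ ... ∼ φₙ∘η', then SD(φ₁∘η,...,φₙ∘η) ≤ SD(η, η'). -/

import Mathlib

/-- An abstract simplicial complex on vertex type `V`. -/
structure ASC (V : Type) where
  faces : Set (Finset V)
  nonempty_of_mem : ∀ {s : Finset V}, s ∈ faces → s.Nonempty
  down_closed : ∀ {s t : Finset V}, s ∈ faces → t ⊆ s → t.Nonempty → t ∈ faces

/-- A simplicial map between abstract simplicial complexes. -/
structure SMap {V W : Type} [DecidableEq W] (K : ASC V) (L : ASC W) where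
  toFun : V → W
  maps_faces : ∀ {s : Finset V}, s ∈ K.faces → s.image toFun ∈ L.faces

namespace SMap

variable {V W U : Type} [DecidableEq V] [DecidableEq W] [DecidableEq U]
  {K : ASC V} {L : ASC W} {M : ASC U}

/-- The identity simplicial map. -/
def id (K : ASC V) : SMap K K :=
  ⟨fun v => v, by intro s hs; simpa using hs⟩

/-- Composition of simplicial maps. -/
def comp (ψ : SMap L M) (φ : SMap K L) : SMap K M :=
  ⟨ψ.toFun ∘ φ.toFun, by
    intro s hs
    have h := ψ.maps_faces (φ.maps_faces hs)
    simpa [Finset.image_image] using h⟩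

end SMap

/-- Two simplicial maps are contiguous if the images of each simplex under the two
maps together span a simplex. -/
def Contiguous {V W : Type} [DecidableEq W] {K : ASC V} {L : ASC W}
    (φ ψ : SMap K L) : Prop :=
  ∀ {s : Finset V}, s ∈ K.faces → (s.image φ.toFun ∪ s.image ψ.toFun) ∈ L.faces

/-- Being in the same contiguity class: the reflexive-transitive closure of
contiguity (`φ ∼ ψ`). -/
def CClass {V W : Type} [DecidableEq W] {K : ASC V} {L : ASC W}
    (φ ψ : SMap K L) : Prop :=
  Relation.ReflTransGen Contiguous φ ψ

/-- The type of subcomplexes of `K`. -/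
def ASC.Sub {V : Type} (K : ASC V) : Type :=
  {Ω : ASC V // Ω.faces ⊆ K.faces}

/-- Restriction of a simplicial map to a subcomplex of the domain. -/
def SMap.restrict {V W : Type} [DecidableEq W] {K : ASC V} {L : ASC W}
    (φ : SMap K L) (Ω : K.Sub) : SMap Ω.1 L :=
  ⟨φ.toFun, by intro s hs; exact φ.maps_faces (Ω.2 hs)⟩

/-- `SDle φ k` : the family `φ` has contiguity distance at most `k`, witnessed by a
cover of `K` by `k+1` subcomplexes on each of which all the maps restrict into a
single contiguity class. -/
def SDle {V W : Type} [DecidableEq W] {K : ASC V} {L : ASC W} {n : ℕ}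
    (φ : Fin n → SMap K L) (k : ℕ) : Prop :=
  ∃ Ω : Fin (k + 1) → K.Sub,
    (∀ s ∈ K.faces, ∃ j, s ∈ (Ω j).1.faces) ∧
    ∀ j i i', CClass ((φ i).restrict (Ω j)) ((φ i').restrict (Ω j))

/-- The `n`-th contiguity distance `SD(φ₁,…,φₙ)`, valued in `ℕ∞`. -/
noncomputable def SD {V W : Type} [DecidableEq W] {K : ASC V} {L : ASC W} {n : ℕ}
    (φ : Fin n → SMap K L) : ℕ∞ :=
  sInf {m : ℕ∞ | ∃ k : ℕ, m = (k : ℕ∞) ∧ SDle φ k}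

/-- `v` is a vertex of `K`. -/
def ASC.isVertex {V : Type} (K : ASC V) (v : V) : Prop :=
  ({v} : Finset V) ∈ K.faces

/-- The constant simplicial map at a vertex `v` of `L`. -/
def constMap {V W : Type} [DecidableEq W] (K : ASC V) (L : ASC W) {v : W}
    (hv : L.isVertex v) : SMap K L :=
  ⟨fun _ => v, by
    intro s hs
    rw [Finset.image_const (K.nonempty_of_mem hs) v]
    exact hv⟩

/-- The inclusion of a subcomplex. -/
def incl {V : Type} [DecidableEq V] {K : ASC V} (Ω : K.Sub) : SMap Ω.1 K :=
  ⟨fun x => x, by intro s hs; simpa using Ω.2 hs⟩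

/-- A subcomplex is categorical if its inclusion is in the same contiguity class
as a constant map. -/
def Categorical {V : Type} [DecidableEq V] {K : ASC V} (Ω : K.Sub) : Prop :=
  ∃ v : V, ∃ hv : K.isVertex v, CClass (incl Ω) (constMap Ω.1 K hv)

/-- `scatle K k` : `K` is covered by `k+1` categorical subcomplexes. -/
def scatle {V : Type} [DecidableEq V] (K : ASC V) (k : ℕ) : Prop :=
  ∃ Ω : Fin (k + 1) → K.Sub,
    (∀ s ∈ K.faces, ∃ j, s ∈ (Ω j).1.faces) ∧ ∀ j, Categorical (Ω j)

/-- The simplicial Lusternik–Schnirelmann category, valued in `ℕ∞`. -/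
noncomputable def scat {V : Type} [DecidableEq V] (K : ASC V) : ℕ∞ :=
  sInf {m : ℕ∞ | ∃ k : ℕ, m = (k : ℕ∞) ∧ scatle K k}

/-- The `n`-fold categorical product `Kⁿ`. -/
def ASC.prodPow {V : Type} [DecidableEq V] (K : ASC V) (n : ℕ) : ASC (Fin n → V) where
  faces := {s | s.Nonempty ∧ ∀ i : Fin n, s.image (fun f => f i) ∈ K.faces}
  nonempty_of_mem := fun h => h.1
  down_closed := by
    intro s t hs hts ht
    refine ⟨ht, fun i => ?_⟩
    exact K.down_closed (hs.2 i) (Finset.image_subset_image (f := fun f => f i) hts)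
      (ht.image _)

/-- Projection to the `i`-th factor of the categorical product. -/
def proj {V : Type} [DecidableEq V] (K : ASC V) (n : ℕ) (i : Fin n) :
    SMap (K.prodPow n) K :=
  ⟨fun f => f i, by intro s hs; exact hs.2 i⟩

/-- The diagonal simplicial map `K → Kⁿ`. -/
def diag {V : Type} [DecidableEq V] (K : ASC V) (n : ℕ) : SMap K (K.prodPow n) :=
  ⟨fun v _ => v, by
    intro s hs
    refine ⟨(K.nonempty_of_mem hs).image _, fun i => ?_⟩
    have h : (s.image fun v (_ : Fin n) => v).image (fun f => f i) = s := by
      rw [Finset.image_image]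
      exact Finset.image_id'
    rw [h]; exact hs⟩

/-- A subcomplex `Ω ⊆ Kⁿ` is `n`-Farber if the diagonal admits a section over `Ω`
up to contiguity class. -/
def IsFarber {V : Type} [DecidableEq V] {K : ASC V} {n : ℕ}
    (Ω : (K.prodPow n).Sub) : Prop :=
  ∃ σ : SMap Ω.1 K, CClass ((diag K n).comp σ) (incl Ω)

/-- `dTCle K n k` : `Kⁿ` is covered by `k+1` `n`-Farber subcomplexes. -/
def dTCle {V : Type} [DecidableEq V] (K : ASC V) (n k : ℕ) : Prop :=
  ∃ Ω : Fin (k + 1) → (K.prodPow n).Sub,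
    (∀ s ∈ (K.prodPow n).faces, ∃ j, s ∈ (Ω j).1.faces) ∧ ∀ j, IsFarber (Ω j)

/-- The `n`-th discrete topological complexity, valued in `ℕ∞`. -/
noncomputable def dTC {V : Type} [DecidableEq V] (K : ASC V) (n : ℕ) : ℕ∞ :=
  sInf {m : ℕ∞ | ∃ k : ℕ, m = (k : ℕ∞) ∧ dTCle K n k}

/-- `K` is edge-path connected: any two vertices are joined by a finite edge path. -/
def ASC.EPConn {V : Type} [DecidableEq V] (K : ASC V) : Prop :=
  ∀ u v : V, K.isVertex u → K.isVertex v →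
    Relation.ReflTransGen (fun a b => ({a, b} : Finset V) ∈ K.faces) u v

/-- `K` is strongly collapsible: the identity is in the same contiguity class as a
constant map. -/
def StronglyCollapsible {V : Type} [DecidableEq V] (K : ASC V) : Prop :=
  ∃ v : V, ∃ hv : K.isVertex v, CClass (SMap.id K) (constMap K K hv)

/-- `μ` is a right strong equivalence: it has a right strong homotopy inverse. -/
def RightStrongEq {V W : Type} [DecidableEq V] [DecidableEq W]
    {K : ASC V} {L : ASC W} (μ : SMap K L) : Prop :=
  ∃ α : SMap L K, CClass (μ.comp α) (SMap.id L)

/-- `μ` is a left strong equivalence: it has a left strong homotopy inverse. -/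
def LeftStrongEq {V W : Type} [DecidableEq V] [DecidableEq W]
    {K : ASC V} {L : ASC W} (μ : SMap K L) : Prop :=
  ∃ β : SMap L K, CClass (β.comp μ) (SMap.id K)

/-- The barycentric subdivision of `K`: vertices are the simplices of `K`, and
simplices are chains of simplices of `K`. -/
def ASC.sd {V : Type} (K : ASC V) : ASC (Finset V) where
  faces := {S | S.Nonempty ∧ (∀ σ ∈ S, σ ∈ K.faces) ∧
    ∀ σ ∈ S, ∀ τ ∈ S, σ ⊆ τ ∨ τ ⊆ σ}
  nonempty_of_mem := fun h => h.1
  down_closed := fun hS hTS hT =>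
    ⟨hT, fun σ hσ => hS.2.1 σ (hTS hσ), fun σ hσ τ hτ => hS.2.2 σ (hTS hσ) τ (hTS hτ)⟩

/-- The induced simplicial map on barycentric subdivisions. -/
def SMap.sd {V W : Type} [DecidableEq V] [DecidableEq W] {K : ASC V} {L : ASC W}
    (φ : SMap K L) : SMap K.sd L.sd :=
  ⟨fun σ => σ.image φ.toFun, by
    intro S hS
    refine ⟨hS.1.image _, ?_, ?_⟩
    · intro τ hτ
      simp only [Finset.mem_image] at hτ
      obtain ⟨σ, hσ, rfl⟩ := hτ
      exact φ.maps_faces (hS.2.1 σ hσ)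
    · intro τ₁ h₁ τ₂ h₂
      simp only [Finset.mem_image] at h₁ h₂
      obtain ⟨σ₁, hσ₁, rfl⟩ := h₁
      obtain ⟨σ₂, hσ₂, rfl⟩ := h₂
      rcases hS.2.2 σ₁ hσ₁ σ₂ hσ₂ with h | h
      · exact Or.inl (Finset.image_subset_image h)
      · exact Or.inr (Finset.image_subset_image h)⟩


/-
Proof idea: on a piece Ω of a cover witnessing SD(η, η') we have η|Ω ∼ η'|Ω, hence
φᵢ∘η|Ω ∼ φᵢ∘η'|Ω ∼ φⱼ∘η'|Ω ∼ φⱼ∘η|Ω, so the same cover witnesses SD(φ₁∘η,…,φₙ∘η).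
-/

section Contiguity

variable {U V W : Type} [DecidableEq V] [DecidableEq W] {M : ASC U} {K : ASC V} {L : ASC W}

theorem Contiguous.symm {φ ψ : SMap M K} (h : Contiguous φ ψ) : Contiguous ψ φ := fun hs => by
  rw [Finset.union_comm]
  exact h hs

theorem Contiguous.comp_left (χ : SMap K L) {φ ψ : SMap M K} (h : Contiguous φ ψ) :
    Contiguous (χ.comp φ) (χ.comp ψ) := fun hs => by
  simpa only [SMap.comp, ← Finset.image_image, Finset.image_union] using χ.maps_faces (h hs)

theorem Contiguous.restrict {φ ψ : SMap M K} (h : Contiguous φ ψ) (Ω : M.Sub) :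
    Contiguous (φ.restrict Ω) (ψ.restrict Ω) := fun hs => h (Ω.2 hs)

theorem CClass.symm {φ ψ : SMap M K} (h : CClass φ ψ) : CClass ψ φ :=
  have : Std.Symm (Contiguous (K := M) (L := K)) :=
    ⟨fun _ _ hc => (Contiguous.symm hc : Contiguous _ _)⟩
  Std.Symm.symm (r := Relation.ReflTransGen Contiguous) _ _ h

theorem CClass.trans {φ ψ χ : SMap M K} (h₁ : CClass φ ψ) (h₂ : CClass ψ χ) : CClass φ χ :=
  Relation.ReflTransGen.trans h₁ h₂

theorem CClass.comp_left (χ : SMap K L) {φ ψ : SMap M K} (h : CClass φ ψ) :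
    CClass (χ.comp φ) (χ.comp ψ) :=
  Relation.ReflTransGen.lift χ.comp (fun _ _ hc => (hc.comp_left χ : Contiguous _ _)) _ _ h

theorem CClass.restrict {φ ψ : SMap M K} (h : CClass φ ψ) (Ω : M.Sub) :
    CClass (φ.restrict Ω) (ψ.restrict Ω) :=
  Relation.ReflTransGen.lift (SMap.restrict · Ω) (fun _ _ hc => (hc.restrict Ω : Contiguous _ _))
    _ _ h

theorem CClass.comp_of_comp {η η' : SMap M K} {φ ψ : SMap K L} (hη : CClass η η')
    (h : CClass (φ.comp η') (ψ.comp η')) : CClass (φ.comp η) (ψ.comp η) :=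
  ((hη.comp_left φ).trans h).trans (hη.symm.comp_left ψ)

end Contiguity

section ContiguityDistance

variable {V W W' : Type} [DecidableEq W] [DecidableEq W'] {K : ASC V} {L : ASC W} {L' : ASC W'}
  {m n : ℕ}

theorem SDle.of_restrict {φ : Fin n → SMap K L} {ψ : Fin m → SMap K L'}
    (H : ∀ Ω : K.Sub, (∀ i i', CClass ((ψ i).restrict Ω) ((ψ i').restrict Ω)) →
      ∀ j j', CClass ((φ j).restrict Ω) ((φ j').restrict Ω))
    {k : ℕ} (hψ : SDle ψ k) : SDle φ k := by
  obtain ⟨Ω, hcover, hclass⟩ := hψ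
  exact ⟨Ω, hcover, fun j => H (Ω j) (hclass j)⟩

theorem SD_le_SD_of_restrict {φ : Fin n → SMap K L} {ψ : Fin m → SMap K L'}
    (H : ∀ Ω : K.Sub, (∀ i i', CClass ((ψ i).restrict Ω) ((ψ i').restrict Ω)) →
      ∀ j j', CClass ((φ j).restrict Ω) ((φ j').restrict Ω)) :
    SD φ ≤ SD ψ := by
  apply sInf_le_sInf
  rintro _ ⟨k, rfl, hψ⟩
  exact ⟨k, rfl, hψ.of_restrict H⟩

end ContiguityDistance

/-- if `φ₁∘η' ∼ … ∼ φₙ∘η'` then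
`SD(φ₁∘η,…,φₙ∘η) ≤ SD(η, η')`. -/
theorem SD_comp_le_SD_pair {U V W : Type} [DecidableEq V] [DecidableEq W]
    {M : ASC U} {K : ASC V} {L : ASC W} {n : ℕ}
    (η η' : SMap M K) (φ : Fin n → SMap K L)
    (h : ∀ i j, CClass ((φ i).comp η') ((φ j).comp η')) :
    SD (fun i => (φ i).comp η) ≤ SD ![η, η'] := by
  refine SD_le_SD_of_restrict fun Ω hΩ i j => ?_
  have hη : CClass (η.restrict Ω) (η'.restrict Ω) := hΩ 0 1
  -- `((φ i).comp η).restrict Ω` is definitionally `(φ i).comp (η.restrict Ω)`.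
  exact hη.comp_of_comp ((h i j).restrict Ω)
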